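/- Let H(x) be a J × L matrix over R = F_2[x]/(x^N - 1) defining a QC code C = {c(x) ∈ R^L : H(x)c(x)^T = 0}, viewed as an F_2-linear code of length LN via the coefficient representation. If there exists a size-(J+1) subset S of {0,...,L-1} such that the vector c with c_i = perm(H_{S\i}(x)) for i ∈ S and 0 otherwise is nonzero, then the minimum Hamming weight of nonzero codewords of C is at most Σ_{i∈S} wt(perm(H_{S\i}(x))). -/
import Mathlib


open Polynomial

/-- The quotient ring `F₂[x]/(x^N - 1)`. -/
noncomputable abbrev Rq (N : ℕ) : Type := AdjoinRoot (X ^ N - C 1 : (ZMod 2)[X])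

/-- The weight of an element of `F₂[x]/(x^N - 1)`: the number of nonzero coefficients
of its canonical representative of degree `< N`.  The Hamming weight of a vector in
`(F₂[x]/(x^N - 1))^L`, viewed as a binary vector of length `L·N`, is the sum of the
weights of its entries. -/
noncomputable def wt {N : ℕ} (hN : N ≠ 0) (a : Rq N) : ℕ :=
  ((AdjoinRoot.modByMonicHom (Polynomial.monic_X_pow_sub_C (1 : ZMod 2) hN) a).support).card

/-- The permanent of a square matrix over a commutative ring. -/
def perm {R : Type*} [CommRing R] {n : ℕ} (B : Matrix (Fin n) (Fin n) R) : R :=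
  ∑ σ : Equiv.Perm (Fin n), ∏ j, B j (σ j)


lemma Rq.two_eq_zero (N : ℕ) : (2 : Rq N) = 0 := by
  have h := congrArg (algebraMap (ZMod 2) (Rq N)) (show (2 : ZMod 2) = 0 by decide)
  rw [map_zero, map_ofNat] at h
  exact h

lemma Rq.neg_eq (N : ℕ) (r : Rq N) : -r = r := by
  have h : r + r = 0 := by
    calc r + r = 2 * r := by ring
    _ = 0 := by rw [Rq.two_eq_zero, zero_mul]
  exact neg_eq_of_add_eq_zero_left h

lemma perm_eq_det {N n : ℕ} (B : Matrix (Fin n) (Fin n) (Rq N)) : perm B = B.det := by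
  rw [Matrix.det_apply', perm]
  rw [← Equiv.sum_comp (Equiv.inv (Equiv.Perm (Fin n)))
    (fun σ => ((Equiv.Perm.sign σ : ℤ) : Rq N) * ∏ i, B (σ i) i)]
  refine Finset.sum_congr rfl fun σ _ => ?_
  have hsgn : ((Equiv.Perm.sign ((Equiv.inv (Equiv.Perm (Fin n))) σ) : ℤ) : Rq N) = 1 := by
    rcases Int.units_eq_one_or (Equiv.Perm.sign ((Equiv.inv (Equiv.Perm (Fin n))) σ)) with h | h
    · rw [h]; norm_num
    · rw [h]; push_cast; exact Rq.neg_eq N 1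
  rw [hsgn, one_mul]
  have : ∏ i, B (((Equiv.inv (Equiv.Perm (Fin n))) σ) i) i
      = ∏ j, B j (σ j) := by
    simp only [Equiv.inv_apply]
    rw [← Equiv.prod_comp σ (fun i => B (σ⁻¹ i) i)]
    simp
  simpa using this.symm

lemma wt_zero {N : ℕ} (hN : N ≠ 0) : wt hN 0 = 0 := by
  simp [wt]

lemma erase_orderEmbOfFin {L J : ℕ} (S : Finset (Fin L)) (hS : S.card = J + 1)
    (b : Fin (J + 1)) (h' : (S.erase (S.orderEmbOfFin hS b)).card = J) (k : Fin J) :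
    (S.erase (S.orderEmbOfFin hS b)).orderEmbOfFin h' k = S.orderEmbOfFin hS (b.succAbove k) := by
  have := Finset.orderEmbOfFin_unique h'
    (f := fun k : Fin J => S.orderEmbOfFin hS (b.succAbove k))
    (fun k => Finset.mem_erase.2 ⟨by
      intro h
      exact Fin.succAbove_ne b k ((S.orderEmbOfFin hS).injective h), Finset.orderEmbOfFin_mem _ _ _⟩)
    ((S.orderEmbOfFin hS).strictMono.comp (Fin.strictMono_succAbove b))
  exact (congrFun this k).symm

/-- If the codeword construction `c_i(x) = perm(H_{S∖i}(x))` for a size-`(J+1)` column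
subset `S` produces a nonzero vector, then the minimum Hamming weight of nonzero
codewords of the QC code defined by `H(x)` is at most `Σ_{i∈S} wt(perm(H_{S∖i}(x)))`. -/
theorem min_distance_le_perm_weight_sum {N J L : ℕ} (hN : N ≠ 0) (hL : J + 1 ≤ L)
    (H : Matrix (Fin J) (Fin L) (Rq N))
    (S : Finset (Fin L)) (hS : S.card = J + 1)
    (c : Fin L → Rq N)
    (hc : ∀ i, ∀ hi : i ∈ S,
      c i = perm (H.submatrix id fun k : Fin J =>
        (((S.erase i).orderIsoOfFin
          (by simp [Finset.card_erase_of_mem hi, hS])) k : Fin L)))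
    (hc0 : ∀ i, i ∉ S → c i = 0)
    (hnz : c ≠ 0) :
    sInf {w : ℕ | ∃ d : Fin L → Rq N, d ≠ 0 ∧ H.mulVec d = 0 ∧ w = ∑ i, wt hN (d i)}
      ≤ ∑ i ∈ S, wt hN (c i) := by
  set e := S.orderEmbOfFin hS with he
  -- c is a codeword
  have hmul : H.mulVec c = 0 := by
    funext j
    show ∑ i, H j i * c i = 0
    rw [← Finset.sum_subset (Finset.subset_univ S)
      (fun i _ hi => by rw [hc0 i hi, mul_zero])]
    -- reindex over Fin (J+1)
    set r : Fin (J + 1) → Fin J := Fin.cases j id with hr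
    set M : Matrix (Fin (J + 1)) (Fin (J + 1)) (Rq N) := fun a b => H (r a) (e b) with hM
    have hdet : M.det = 0 := by
      refine Matrix.det_zero_of_row_eq (M := M) (i := 0) (j := Fin.succ j)
        (Fin.succ_ne_zero j).symm ?_
      funext b
      simp [hM, hr]
    have hexp := Matrix.det_succ_row_zero M
    have hsgn : ∀ b : Fin (J + 1), ((-1 : Rq N)) ^ (b : ℕ) = 1 := by
      intro b
      rw [Rq.neg_eq N 1, one_pow]
    rw [hdet] at hexp
    -- ∑ i in S = ∑ b : Fin (J+1)
    have hmap : Finset.univ.map e.toEmbedding = S := by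
      apply Finset.eq_of_subset_of_card_le
      · intro i hi
        simp only [Finset.mem_map, Finset.mem_univ, true_and] at hi
        obtain ⟨b, rfl⟩ := hi
        exact Finset.orderEmbOfFin_mem _ _ _
      · simp [hS]
    have hreindex : ∑ i ∈ S, H j i * c i = ∑ b : Fin (J + 1), H j (e b) * c (e b) := by
      rw [← hmap, Finset.sum_map]
      rfl
    rw [hreindex]
    have key : ∀ b : Fin (J + 1),
        c (e b) = (M.submatrix Fin.succ b.succAbove).det := by
      intro b
      have hmem : e b ∈ S := Finset.orderEmbOfFin_mem _ _ _
      rw [hc (e b) hmem, perm_eq_det]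
      congr 1
      funext a k
      simp only [Matrix.submatrix_apply, id_eq, hM]
      rw [Finset.coe_orderIsoOfFin_apply]
      rw [erase_orderEmbOfFin S hS b (by simp [Finset.card_erase_of_mem hmem, hS]) k]
      congr 1
    calc ∑ b : Fin (J + 1), H j (e b) * c (e b)
        = ∑ b : Fin (J + 1), (-1 : Rq N) ^ (b : ℕ) * M 0 b * (M.submatrix Fin.succ b.succAbove).det := by
          refine Finset.sum_congr rfl fun b _ => ?_
          rw [hsgn b, one_mul, key b]
          simp [hM, hr]
      _ = 0 := hexp.symm
  -- sum over univ = sum over S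
  have hsum : ∑ i, wt hN (c i) = ∑ i ∈ S, wt hN (c i) := by
    refine (Finset.sum_subset (Finset.subset_univ S) fun i _ hi => ?_).symm
    rw [hc0 i hi, wt_zero]
  exact hsum ▸ Nat.sInf_le ⟨c, hnz, hmul, rfl⟩
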